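/- Let f : X × Y → ℝ and suppose for every y ∈ Y there exists c(y) > 0 such that for all x ∈ X, f(x,y) − inf_{x'} f(x',y) ≤ c(y)·‖∇ₓ f(x,y)‖². Define φ(x) := sup_{y ∈ Y} f(x,y) and assume for each x the supremum is attained, with argmax set M(x) nonempty, and that c* := sup_{y ∈ M(x)} c(y) is finite. Then for every x, φ(x) − inf_{x'} φ(x') ≤ c*(x) · inf_{y ∈ M(x)} ‖∇ₓ f(x,y)‖². -/
import Mathlib


open scoped BigOperators

/-- Gradient dominance transfers from `f(·, y)` to the max-function `φ(x) = sup_y f(x,y)`. -/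
theorem stmt_0 {n : ℕ} {Y : Type*} [Nonempty Y]
    (f : EuclideanSpace ℝ (Fin n) → Y → ℝ)
    (hdiff : ∀ y, Differentiable ℝ fun x => f x y)
    (c : Y → ℝ) (hc : ∀ y, 0 < c y)
    (hbdd : ∀ y, BddBelow (Set.range fun x' => f x' y))
    (hdom : ∀ x y, f x y - (⨅ x', f x' y) ≤ c y * ‖gradient (fun x' => f x' y) x‖ ^ 2)
    (φ : EuclideanSpace ℝ (Fin n) → ℝ)
    (hφ : ∀ x, IsGreatest (Set.range (f x)) (φ x))
    (hφbdd : BddBelow (Set.range φ))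
    (cstar : EuclideanSpace ℝ (Fin n) → ℝ)
    (hcstar : ∀ x, IsLUB (c '' {y | f x y = φ x}) (cstar x)) :
    ∀ x, φ x - (⨅ x', φ x') ≤
      cstar x * ⨅ y : {y | f x y = φ x}, ‖gradient (fun x' => f x' (y : Y)) x‖ ^ 2 := by
  intro x
  obtain ⟨y₀, hy₀⟩ := (hφ x).1
  have hS : Nonempty {y | f x y = φ x} := ⟨⟨y₀, hy₀⟩⟩
  have hcs0 : 0 ≤ cstar x :=
    le_trans (hc y₀).le ((hcstar x).1 ⟨y₀, hy₀, rfl⟩)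
  rw [Real.mul_iInf_of_nonneg hcs0]
  refine le_ciInf fun ⟨y, hy⟩ => ?_
  have hyc : c y ≤ cstar x := (hcstar x).1 ⟨y, hy, rfl⟩
  have h1 : (⨅ x', f x' y) ≤ ⨅ x', φ x' := by
    refine ciInf_mono (hbdd y) fun x' => (hφ x').2 ⟨y, rfl⟩
  calc φ x - (⨅ x', φ x') ≤ f x y - (⨅ x', f x' y) := by
        rw [← hy]; linarith
    _ ≤ c y * ‖gradient (fun x' => f x' y) x‖ ^ 2 := hdom x y
    _ ≤ cstar x * ‖gradient (fun x' => f x' y) x‖ ^ 2 := by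
        apply mul_le_mul_of_nonneg_right hyc (by positivity)
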